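/- arXiv:2503.07729 — 2 statements merged into one kernel-verified Lean document; each statement's English description precedes it below -/
import Mathlib

section
/- Assume Π_A satisfies energy-band thermalization in the shell S (of cardinality d ≥ 1) with bandwidth ΔE > 0 and accuracy ε > 0, let ρ be a state supported on the shell, and let w be a weight function such that |w̃(δE)| ≤ w₀ for every δE ∈ ℝ with |δE| ≥ ΔE, where w₀ ≥ 0. Then |∫_ℝ w(t) · Tr(ρ(t) Π_A) dt − ⟨Π_A⟩_S| < (ε + w₀ · √(⟨Π_A⟩_S)) · √(d · Tr(ρ²)). -/
open MeasureTheory Filter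
open scoped ComplexOrder

namespace QET

variable {D : ℕ}

/-- `exp(-itH)` for the Hamiltonian `H = Σ_n (E n) • P_n`, where `P_n` is the orthogonal
projection onto the `n`-th vector of the fixed orthonormal eigenbasis `e`.  All operators are
written as matrices in this eigenbasis, so `H` is diagonal and
`exp(-itH) = diag (exp (-i t E n))`. -/
noncomputable def U (E : Fin D → ℝ) (t : ℝ) : Matrix (Fin D) (Fin D) ℂ :=
  Matrix.diagonal fun n => Complex.exp (-(Complex.I) * t * (E n))

/-- Time evolution `X(t) = exp(-itH) · X · exp(itH)`. -/
noncomputable def evolve (E : Fin D → ℝ) (t : ℝ) (X : Matrix (Fin D) (Fin D) ℂ) :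
    Matrix (Fin D) (Fin D) ℂ :=
  U E t * X * U E (-t)

/-- A state: a positive semidefinite operator with unit trace. -/
def IsState (ρ : Matrix (Fin D) (Fin D) ℂ) : Prop :=
  ρ.PosSemidef ∧ ρ.trace = 1

/-- An observable: an orthogonal projection (Hermitian idempotent). -/
def IsObservable (P : Matrix (Fin D) (Fin D) ℂ) : Prop :=
  P.IsHermitian ∧ P * P = P

/-- Orthogonal projection `Π_S` onto the energy shell spanned by `{e n : n ∈ S}`. -/
noncomputable def shellProj (S : Finset (Fin D)) : Matrix (Fin D) (Fin D) ℂ :=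
  Matrix.diagonal fun n => if n ∈ S then 1 else 0

/-- A state is supported on the shell of `S`: `Π_S ρ Π_S = ρ`. -/
def SupportedOn (S : Finset (Fin D)) (ρ : Matrix (Fin D) (Fin D) ℂ) : Prop :=
  shellProj S * ρ * shellProj S = ρ

/-- Thermal value `⟨P⟩_S = Tr(P Π_S)/d` (a real number: trace of Hermitian products below). -/
noncomputable def thermVal (S : Finset (Fin D)) (P : Matrix (Fin D) (Fin D) ℂ) : ℝ :=
  (P * shellProj S).trace.re / S.card

/-- Fourier transform `w̃(E) = ∫ w(t) exp(-iEt) dt` of a weight function. -/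
noncomputable def fourier (w : ℝ → ℝ) (En : ℝ) : ℂ :=
  ∫ t : ℝ, (w t : ℂ) * Complex.exp (-(Complex.I) * En * t)

/-- A weight function: integrable, nonnegative, normalized to `∫ w = 1`. -/
structure IsWeight (w : ℝ → ℝ) : Prop where
  integrable : Integrable w
  nonneg : ∀ t, 0 ≤ w t
  normalized : (∫ t : ℝ, w t) = 1

/-- A completely positive weight: a weight function whose Fourier transform is a
nonnegative real number everywhere. -/
structure IsCPWeight (w : ℝ → ℝ) extends IsWeight w : Prop where
  fourier_im : ∀ En : ℝ, (fourier w En).im = 0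
  fourier_nonneg : ∀ En : ℝ, 0 ≤ (fourier w En).re

/-- The matrix element `⟨e n, (P - ⟨P⟩_S · 1) e m⟩ = ⟨e n, P e m⟩ - ⟨P⟩_S δ_{nm}`. -/
noncomputable def devEl (S : Finset (Fin D)) (P : Matrix (Fin D) (Fin D) ℂ)
    (n m : Fin D) : ℂ :=
  P n m - if n = m then (thermVal S P : ℂ) else 0

/-- Band variance `Σ_{n,m ∈ S, |E n - E m| < ΔE} |⟨e n, P e m⟩ - ⟨P⟩_S δ_{nm}|²`. -/
noncomputable def bandVar (S : Finset (Fin D)) (E : Fin D → ℝ) (ΔE : ℝ)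
    (P : Matrix (Fin D) (Fin D) ℂ) : ℝ :=
  ∑ n ∈ S, ∑ m ∈ S,
    if |E n - E m| < ΔE then ‖devEl S P n m‖ ^ 2 else 0

/-- Energy-band thermalization in the shell `S` with bandwidth `ΔE` and accuracy `ε`. -/
def EnergyBandTherm (S : Finset (Fin D)) (E : Fin D → ℝ) (ΔE ε : ℝ)
    (P : Matrix (Fin D) (Fin D) ℂ) : Prop :=
  (1 / (S.card : ℝ)) * bandVar S E ΔE P < ε ^ 2

/-- Expectation value `⟨v, P v⟩` of an operator in a vector. -/
noncomputable def expVal (P : Matrix (Fin D) (Fin D) ℂ) (v : Fin D → ℂ) : ℂ :=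
  dotProduct (star v) (P.mulVec v)


end QET

/-!
In the eigenbasis of `H` the time average equals `∑ w̃(E n - E m) ρ n m (Π_A) m n`. Since
`w̃ 0 = 1` and `Tr ρ = 1`, subtracting `⟨Π_A⟩_S` replaces `Π_A` by its deviations
`devEl`, and only pairs `n, m ∈ S` contribute. Split these pairs by whether
`|E n - E m| < ΔE`: inside the band `|w̃| ≤ 1` and energy-band thermalization bounds the
deviations; outside `|w̃| ≤ w₀`, and because `Π_A` is a projection all deviations together
have squared norm at most `d ⟨Π_A⟩_S`. Cauchy–Schwarz against `∑ |ρ n m|² = Tr ρ²` on each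
part gives the bound, strictly because `ρ ≠ 0`.
-/

open Finset

namespace Matrix

variable {ι : Type*} [Fintype ι] {A : Matrix ι ι ℂ}

theorem IsHermitian.re_mul_self_apply_self (hA : A.IsHermitian) (i : ι) :
    ((A * A) i i).re = ∑ j, ‖A i j‖ ^ 2 := by
  rw [mul_apply, Complex.re_sum]
  refine sum_congr rfl fun j _ => ?_
  rw [← hA.apply j i, Complex.star_def, Complex.mul_conj, Complex.ofReal_re,
    Complex.normSq_eq_norm_sq]

theorem IsHermitian.re_trace_mul_self (hA : A.IsHermitian) :
    (A * A).trace.re = ∑ i, ∑ j, ‖A i j‖ ^ 2 := by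
  rw [trace, Complex.re_sum]
  exact sum_congr rfl fun i _ => hA.re_mul_self_apply_self i

theorem IsHermitian.re_trace_mul_self_pos (hA : A.IsHermitian) (hA0 : A ≠ 0) :
    0 < (A * A).trace.re := by
  have hpos : 0 < (Aᴴ * A).trace :=
    (posSemidef_conjTranspose_mul_self A).trace_nonneg.lt_of_ne'
      (trace_conjTranspose_mul_self_eq_zero_iff.not.mpr hA0)
  rw [hA.eq] at hpos
  exact (Complex.pos_iff.mp hpos).1

end Matrix

theorem norm_sum_mul_mul_le_of_norm_le {ι R : Type*} [SeminormedRing R] (s : Finset ι)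
    (p : ι → Prop) [DecidablePred p] {c x y : ι → R} {w₀ : ℝ} (hw₀ : 0 ≤ w₀)
    (hc : ∀ i ∈ s, ‖c i‖ ≤ 1) (hc' : ∀ i ∈ s, ¬p i → ‖c i‖ ≤ w₀) :
    ‖∑ i ∈ s, c i * (x i * y i)‖ ≤ √(∑ i ∈ s, ‖x i‖ ^ 2) *
      (√(∑ i ∈ s with p i, ‖y i‖ ^ 2) + w₀ * √(∑ i ∈ s, ‖y i‖ ^ 2)) := by
  calc ‖∑ i ∈ s, c i * (x i * y i)‖
      ≤ ∑ i ∈ s, ‖c i‖ * (‖x i‖ * ‖y i‖) :=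
        norm_sum_le_of_le s fun i _ =>
          (norm_mul_le _ _).trans (by gcongr; exact norm_mul_le _ _)
    _ = ∑ i ∈ s with p i, ‖c i‖ * (‖x i‖ * ‖y i‖) +
          ∑ i ∈ s with ¬p i, ‖c i‖ * (‖x i‖ * ‖y i‖) :=
        (sum_filter_add_sum_filter_not s p _).symm
    _ ≤ ∑ i ∈ s with p i, ‖x i‖ * ‖y i‖ + w₀ * ∑ i ∈ s with ¬p i, ‖x i‖ * ‖y i‖ := by
        rw [mul_sum]
        refine add_le_add (sum_le_sum fun i hi => ?_) (sum_le_sum fun i hi => ?_)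
        · exact mul_le_of_le_one_left (by positivity) (hc i (mem_filter.mp hi).1)
        · obtain ⟨his, hpi⟩ := mem_filter.mp hi
          exact mul_le_mul_of_nonneg_right (hc' i his hpi) (by positivity)
    _ ≤ √(∑ i ∈ s, ‖x i‖ ^ 2) * √(∑ i ∈ s with p i, ‖y i‖ ^ 2) +
          w₀ * (√(∑ i ∈ s, ‖x i‖ ^ 2) * √(∑ i ∈ s, ‖y i‖ ^ 2)) := by
        gcongr
        · exact (Real.sum_mul_le_sqrt_mul_sqrt _ _ _).trans
            (by gcongr; exact filter_subset _ _)
        · exact (Real.sum_mul_le_sqrt_mul_sqrt _ _ _).trans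
            (by gcongr <;> exact filter_subset _ _)
    _ = _ := by ring

namespace QET

variable {D : ℕ}

theorem norm_exp_neg_I_mul_mul (c t : ℝ) : ‖Complex.exp (-Complex.I * c * t)‖ = 1 := by
  rw [Complex.norm_exp]
  simp

theorem integrable_ofReal_mul_exp {w : ℝ → ℝ} (hw : Integrable w) (c : ℝ) :
    Integrable fun t : ℝ => (w t : ℂ) * Complex.exp (-Complex.I * c * t) :=
  hw.ofReal.mul_bdd (by fun_prop)
    (Eventually.of_forall fun t => (norm_exp_neg_I_mul_mul c t).le)

theorem IsWeight.norm_fourier_le_one {w : ℝ → ℝ} (hw : IsWeight w) (c : ℝ) :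
    ‖fourier w c‖ ≤ 1 :=
  calc ‖fourier w c‖ ≤ ∫ t : ℝ, w t :=
        norm_integral_le_of_norm_le hw.integrable <| Eventually.of_forall fun t => by
          rw [norm_mul, norm_exp_neg_I_mul_mul, mul_one, Complex.norm_real,
            Real.norm_of_nonneg (hw.nonneg t)]
    _ = 1 := hw.normalized

theorem IsWeight.fourier_zero {w : ℝ → ℝ} (hw : IsWeight w) : fourier w 0 = 1 := by
  simp only [fourier, Complex.ofReal_zero, mul_zero, zero_mul, Complex.exp_zero, mul_one]
  rw [integral_complex_ofReal, hw.normalized, Complex.ofReal_one]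

theorem evolve_apply (E : Fin D → ℝ) (t : ℝ) (X : Matrix (Fin D) (Fin D) ℂ) (n m : Fin D) :
    evolve E t X n m = Complex.exp (-Complex.I * ((E n - E m : ℝ) : ℂ) * t) * X n m := by
  rw [evolve, U, U, Matrix.mul_diagonal, Matrix.diagonal_mul, mul_right_comm,
    ← Complex.exp_add]
  congr 2
  push_cast
  ring

theorem integral_mul_trace_evolve_mul {w : ℝ → ℝ} (hw : Integrable w) (E : Fin D → ℝ)
    (X P : Matrix (Fin D) (Fin D) ℂ) :
    ∫ t : ℝ, (w t : ℂ) * (evolve E t X * P).trace =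
      ∑ n, ∑ m, fourier w (E n - E m) * (X n m * P m n) := by
  have hint (n m : Fin D) :=
    (integrable_ofReal_mul_exp hw (E n - E m)).mul_const (X n m * P m n)
  have hexpand (t : ℝ) : (w t : ℂ) * (evolve E t X * P).trace =
      ∑ n, ∑ m, (w t : ℂ) * Complex.exp (-Complex.I * ((E n - E m : ℝ) : ℂ) * t) *
        (X n m * P m n) := by
    simp only [Matrix.trace, Matrix.diag, Matrix.mul_apply, evolve_apply, mul_sum]
    exact sum_congr rfl fun n _ => sum_congr rfl fun m _ => by ring
  simp_rw [hexpand]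
  rw [integral_finsetSum _ fun n _ => integrable_finsetSum _ fun m _ => hint n m]
  refine sum_congr rfl fun n _ => ?_
  rw [integral_finsetSum _ fun m _ => hint n m]
  exact sum_congr rfl fun m _ => integral_mul_const _ _

section Shell

variable {S : Finset (Fin D)} {ρ : Matrix (Fin D) (Fin D) ℂ}

theorem SupportedOn.apply_eq_zero (h : SupportedOn S ρ) {n m : Fin D}
    (hnm : n ∉ S ∨ m ∉ S) : ρ n m = 0 := by
  rw [← h, shellProj, Matrix.mul_diagonal, Matrix.diagonal_mul]
  rcases hnm with hn | hm <;> simp [*]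

theorem SupportedOn.sum_sum_eq {M : Type*} [AddCommMonoid M] (h : SupportedOn S ρ)
    (f : Fin D → Fin D → ℂ → M) (hf : ∀ n m, f n m 0 = 0) :
    ∑ n, ∑ m, f n m (ρ n m) = ∑ n ∈ S, ∑ m ∈ S, f n m (ρ n m) := by
  have hrow (n : Fin D) : ∑ m ∈ S, f n m (ρ n m) = ∑ m, f n m (ρ n m) :=
    sum_subset (subset_univ S) fun m _ hm => by rw [h.apply_eq_zero (.inr hm), hf]
  simp_rw [hrow]
  exact (sum_subset (subset_univ S) fun n _ hn =>
    sum_eq_zero fun m _ => by rw [h.apply_eq_zero (.inl hn), hf]).symm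

theorem SupportedOn.trace_eq (h : SupportedOn S ρ) : ρ.trace = ∑ n ∈ S, ρ n n :=
  (sum_subset (subset_univ S) fun _ _ hn => h.apply_eq_zero (.inl hn)).symm

theorem SupportedOn.re_trace_mul_self (h : SupportedOn S ρ) (hρ : ρ.IsHermitian) :
    (ρ * ρ).trace.re = ∑ n ∈ S, ∑ m ∈ S, ‖ρ n m‖ ^ 2 := by
  rw [hρ.re_trace_mul_self, h.sum_sum_eq (fun _ _ z => ‖z‖ ^ 2) (by simp)]

theorem trace_mul_shellProj (S : Finset (Fin D)) (P : Matrix (Fin D) (Fin D) ℂ) :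
    (P * shellProj S).trace = ∑ n ∈ S, P n n := by
  simp [Matrix.trace, shellProj, Matrix.mul_diagonal, sum_ite_mem]

theorem card_mul_thermVal (S : Finset (Fin D)) (P : Matrix (Fin D) (Fin D) ℂ) :
    S.card * thermVal S P = ∑ n ∈ S, (P n n).re := by
  rcases S.eq_empty_or_nonempty with rfl | hS
  · simp
  · rw [thermVal, trace_mul_shellProj, Complex.re_sum,
      mul_div_cancel₀ _ (Nat.cast_ne_zero.mpr hS.card_pos.ne')]

end Shell

section Observable

variable {S : Finset (Fin D)} {P : Matrix (Fin D) (Fin D) ℂ}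

theorem IsObservable.re_apply_self (hP : IsObservable P) (n : Fin D) :
    (P n n).re = ∑ m, ‖P n m‖ ^ 2 := by
  simpa only [hP.2] using hP.1.re_mul_self_apply_self n

theorem norm_devEl_sq (S : Finset (Fin D)) (P : Matrix (Fin D) (Fin D) ℂ) (n m : Fin D) :
    ‖devEl S P n m‖ ^ 2 = ‖P n m‖ ^ 2 -
      if n = m then 2 * thermVal S P * (P n n).re - thermVal S P ^ 2 else 0 := by
  split_ifs with h
  · subst h
    rw [devEl, if_pos rfl, Complex.sq_norm, Complex.sq_norm]
    simp only [Complex.normSq_apply, Complex.sub_re, Complex.sub_im, Complex.ofReal_re,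
      Complex.ofReal_im]
    ring
  · rw [devEl, if_neg h, sub_zero, sub_zero]

theorem norm_devEl_comm (hP : P.IsHermitian) (n m : Fin D) :
    ‖devEl S P m n‖ = ‖devEl S P n m‖ := by
  have hstar : devEl S P m n = star (devEl S P n m) := by
    rw [devEl, devEl, star_sub, hP.apply m n]
    congr 1
    split_ifs <;> simp_all
  rw [hstar, Complex.star_def, Complex.norm_conj]

theorem IsObservable.sum_sum_norm_devEl_sq_le (hP : IsObservable P) :
    ∑ n ∈ S, ∑ m ∈ S, ‖devEl S P n m‖ ^ 2 ≤ S.card * thermVal S P := by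
  set τ := thermVal S P
  have hrow (n : Fin D) (hn : n ∈ S) :
      ∑ m ∈ S, ‖devEl S P n m‖ ^ 2 ≤ (P n n).re - (2 * τ * (P n n).re - τ ^ 2) := by
    rw [sum_congr rfl fun m _ => norm_devEl_sq S P n m, sum_sub_distrib, sum_ite_eq,
      if_pos hn]
    gcongr
    rw [hP.re_apply_self]
    exact sum_le_sum_of_subset_of_nonneg (subset_univ S) fun _ _ _ => sq_nonneg _
  calc _ ≤ ∑ n ∈ S, ((P n n).re - (2 * τ * (P n n).re - τ ^ 2)) := sum_le_sum hrow
    _ = S.card * τ - S.card * τ ^ 2 := by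
        rw [sum_sub_distrib, sum_sub_distrib, ← mul_sum, ← card_mul_thermVal, sum_const,
          nsmul_eq_mul]
        ring
    _ ≤ S.card * τ := sub_le_self _ (by positivity)

end Observable

theorem integral_mul_trace_evolve_sub_thermVal {w : ℝ → ℝ} (hw : IsWeight w)
    (E : Fin D → ℝ) {S : Finset (Fin D)} {ρ : Matrix (Fin D) (Fin D) ℂ} (hρ : ρ.trace = 1)
    (hsupp : SupportedOn S ρ) (P : Matrix (Fin D) (Fin D) ℂ) :
    (∫ t : ℝ, (w t : ℂ) * (evolve E t ρ * P).trace) - thermVal S P =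
      ∑ n ∈ S, ∑ m ∈ S, fourier w (E n - E m) * (ρ n m * devEl S P m n) := by
  set τ : ℂ := (thermVal S P : ℂ)
  have hdiag : ∑ n ∈ S, ∑ m ∈ S,
      fourier w (E n - E m) * (ρ n m * if m = n then τ else 0) = τ := by
    have hrow (n : Fin D) (hn : n ∈ S) :
        ∑ m ∈ S, fourier w (E n - E m) * (ρ n m * if m = n then τ else 0) = ρ n n * τ := by
      simp only [mul_ite, mul_zero, sum_ite_eq', if_pos hn, sub_self, hw.fourier_zero,
        one_mul]
    rw [sum_congr rfl hrow, ← sum_mul, ← hsupp.trace_eq, hρ, one_mul]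
  rw [integral_mul_trace_evolve_mul hw.integrable,
    hsupp.sum_sum_eq (fun n m z => fourier w (E n - E m) * (z * P m n)) (by simp), ← hdiag,
    ← sum_sub_distrib]
  refine sum_congr rfl fun n _ => ?_
  rw [← sum_sub_distrib]
  refine sum_congr rfl fun m _ => ?_
  rw [devEl]
  ring

theorem EnergyBandTherm.sqrt_bandVar_lt {S : Finset (Fin D)} {E : Fin D → ℝ} {ΔE ε : ℝ}
    {P : Matrix (Fin D) (Fin D) ℂ} (h : EnergyBandTherm S E ΔE ε P) (hS : 0 < S.card)
    (hε : 0 < ε) : √(bandVar S E ΔE P) < ε * √S.card := by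
  have hd : (0 : ℝ) < S.card := by exact_mod_cast hS
  rw [EnergyBandTherm, one_div_mul_eq_div, div_lt_iff₀ hd] at h
  rwa [Real.sqrt_lt' (by positivity), mul_pow, Real.sq_sqrt hd.le]

theorem norm_sum_fourier_mul_devEl_le {w : ℝ → ℝ} (hw : IsWeight w) {E : Fin D → ℝ}
    {ΔE w₀ : ℝ} (hw₀ : 0 ≤ w₀)
    (hband : ∀ δE : ℝ, ΔE ≤ |δE| → ‖fourier w δE‖ ≤ w₀)
    {S : Finset (Fin D)} {P : Matrix (Fin D) (Fin D) ℂ} (hP : P.IsHermitian)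
    (ρ : Matrix (Fin D) (Fin D) ℂ) :
    ‖∑ n ∈ S, ∑ m ∈ S, fourier w (E n - E m) * (ρ n m * devEl S P m n)‖ ≤
      √(∑ n ∈ S, ∑ m ∈ S, ‖ρ n m‖ ^ 2) * (√(bandVar S E ΔE P) +
        w₀ * √(∑ n ∈ S, ∑ m ∈ S, ‖devEl S P n m‖ ^ 2)) := by
  have hswap (p : Fin D × Fin D) : ‖devEl S P p.2 p.1‖ = ‖devEl S P p.1 p.2‖ :=
    norm_devEl_comm hP _ _
  have hband_sum : ∑ p ∈ S ×ˢ S with |E p.1 - E p.2| < ΔE, ‖devEl S P p.2 p.1‖ ^ 2 =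
      bandVar S E ΔE P := by
    simp only [sum_filter, hswap]
    exact sum_product _ _ _
  have h := norm_sum_mul_mul_le_of_norm_le (S ×ˢ S) (fun p => |E p.1 - E p.2| < ΔE)
    (c := fun p => fourier w (E p.1 - E p.2)) (x := fun p => ρ p.1 p.2)
    (y := fun p => devEl S P p.2 p.1) hw₀ (fun _ _ => hw.norm_fourier_le_one _)
    (fun _ _ hp => hband _ (not_lt.mp hp))
  rw [hband_sum] at h
  simpa only [hswap, sum_product] using h

theorem energy_band_thermalization_implies_thermalization_oa_general
    {D : ℕ} (E : Fin D → ℝ)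
    (S : Finset (Fin D)) (hd : 1 ≤ S.card)
    (PiA : Matrix (Fin D) (Fin D) ℂ) (hPiA : IsObservable PiA)
    (ΔE ε : ℝ) (hε : 0 < ε)
    (hEBT : EnergyBandTherm S E ΔE ε PiA)
    (ρ : Matrix (Fin D) (Fin D) ℂ) (hρ : IsState ρ) (hsupp : SupportedOn S ρ)
    (w : ℝ → ℝ) (hw : IsWeight w) (w₀ : ℝ) (hw₀ : 0 ≤ w₀)
    (hband : ∀ δE : ℝ, ΔE ≤ |δE| → ‖fourier w δE‖ ≤ w₀) :
    ‖(∫ t : ℝ, (w t : ℂ) * (evolve E t ρ * PiA).trace) - (thermVal S PiA : ℂ)‖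
      < (ε + w₀ * Real.sqrt (thermVal S PiA)) *
        Real.sqrt (S.card * (ρ * ρ).trace.re) := by
  have hT : 0 < √((ρ * ρ).trace.re) :=
    Real.sqrt_pos.mpr (hρ.1.1.re_trace_mul_self_pos fun h => by simpa [h] using hρ.2)
  rw [integral_mul_trace_evolve_sub_thermVal hw E hρ.2 hsupp]
  calc _ ≤ √((ρ * ρ).trace.re) * (√(bandVar S E ΔE PiA) +
          w₀ * √(∑ n ∈ S, ∑ m ∈ S, ‖devEl S PiA n m‖ ^ 2)) := by
        rw [hsupp.re_trace_mul_self hρ.1.1]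
        exact norm_sum_fourier_mul_devEl_le hw hw₀ hband hPiA.1 ρ
    _ < √((ρ * ρ).trace.re) * (ε * √S.card + w₀ * √(S.card * thermVal S PiA)) := by
        refine mul_lt_mul_of_pos_left
          (add_lt_add_of_lt_of_le (hEBT.sqrt_bandVar_lt hd hε) ?_) hT
        gcongr
        exact hPiA.sum_sum_norm_devEl_sq_le
    _ = _ := by
        rw [Real.sqrt_mul (Nat.cast_nonneg _), Real.sqrt_mul (Nat.cast_nonneg _)]
        ring

/-- **Energy-band thermalization implies thermalization o.a. over accessible timescales.**
If `Π_A` satisfies energy-band thermalization in the shell `S` (of cardinality `d ≥ 1`)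
with bandwidth `ΔE > 0` and accuracy `ε > 0`, `ρ` is a state supported on the shell, and
`w` is a weight function with `|w̃(δE)| ≤ w₀` whenever `|δE| ≥ ΔE`, then
`|∫ w(t) Tr(ρ(t) Π_A) dt - ⟨Π_A⟩_S| < (ε + w₀ √⟨Π_A⟩_S) · √(d · Tr ρ²)`. -/
theorem energy_band_thermalization_implies_thermalization_oa
    {D : ℕ} (hD : 0 < D) (E : Fin D → ℝ)
    (S : Finset (Fin D)) (hd : 1 ≤ S.card)
    (PiA : Matrix (Fin D) (Fin D) ℂ) (hPiA : IsObservable PiA)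
    (ΔE ε : ℝ) (hΔE : 0 < ΔE) (hε : 0 < ε)
    (hEBT : EnergyBandTherm S E ΔE ε PiA)
    (ρ : Matrix (Fin D) (Fin D) ℂ) (hρ : IsState ρ) (hsupp : SupportedOn S ρ)
    (w : ℝ → ℝ) (hw : IsWeight w) (w₀ : ℝ) (hw₀ : 0 ≤ w₀)
    (hband : ∀ δE : ℝ, ΔE ≤ |δE| → ‖fourier w δE‖ ≤ w₀) :
    ‖(∫ t : ℝ, (w t : ℂ) * (evolve E t ρ * PiA).trace) - (thermVal S PiA : ℂ)‖
      < (ε + w₀ * Real.sqrt (thermVal S PiA)) *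
        Real.sqrt (S.card * (ρ * ρ).trace.re) :=
  energy_band_thermalization_implies_thermalization_oa_general E S hd PiA hPiA ΔE ε hε hEBT ρ hρ
    hsupp w hw w₀ hw₀ hband

end QET
end

section
/- Let Π_A be an observable on ℂ^D with Tr(Π_A) > 0, set ρ_A := Π_A / Tr(Π_A) and ⟨Π_A⟩ := Tr(Π_A)/D, let w be a weight function, let λ ∈ [0,1], and let (f_k)_{k ∈ Fin D} be an orthonormal eigenbasis of Π_A (each f_k satisfies Π_A f_k = f_k or Π_A f_k = 0). Suppose the number of indices k with Π_A f_k = f_k and |∫_ℝ w(t) · ⟨f_k(t), Π_A f_k(t)⟩ dt − ⟨Π_A⟩| ≥ λ is at most n_f, where f_k(t) := exp(−itH) f_k. Then |∫_ℝ w(t) · Tr(ρ_A(t) Π_A) dt − ⟨Π_A⟩| ≤ λ + (n_f / Tr(Π_A)) · (1 − λ). -/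
open MeasureTheory Filter
open scoped ComplexOrder

namespace QET

variable {D : ℕ}

/-!
Writing `Π_A = ∑_{k ∈ G} f_k f_kᴴ` with `G = {k | Π_A f_k = f_k}` gives `Tr Π_A = #G` and
`Tr(ρ_A(t) Π_A) = #G⁻¹ ∑_{k ∈ G} ⟨f_k(t), Π_A f_k(t)⟩`, so the weighted autocorrelator is the
average over `G` of the eigenbasis values `I_k`. Both `I_k` and `⟨Π_A⟩ = #G / D` lie in `[0, 1]`,
so `|I_k - ⟨Π_A⟩|` is at most `1` for the at most `n_f` exceptional `k` and below `λ` for the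
others; averaging these bounds gives `λ + n_f (1 - λ) / #G`.
-/

open Matrix Finset

section Spectral

variable {R n : Type*} [CommRing R] [StarRing R] [Fintype n] [DecidableEq n] {f : n → n → R}

theorem sum_vecMulVec_star_eq_one
    (hon : ∀ k l, star (f k) ⬝ᵥ f l = if k = l then 1 else 0) :
    ∑ k, vecMulVec (f k) (star (f k)) = 1 := by
  -- `F` has columns `f k`: orthonormality says `Fᴴ * F = 1`, the claim is `F * Fᴴ = 1`.
  set F : Matrix n n R := (Matrix.of f)ᵀ
  have hFF : Fᴴ * F = 1 := by
    ext k l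
    simpa [F, mul_apply, dotProduct, one_apply] using hon k l
  calc ∑ k, vecMulVec (f k) (star (f k)) = F * Fᴴ := by
        ext i j
        simp [F, Matrix.sum_apply, vecMulVec_apply, mul_apply]
    _ = 1 := mul_eq_one_comm.mp hFF

theorem eq_sum_vecMulVec_of_mulVec_eq {P : Matrix n n R} {s : Finset n}
    (hon : ∀ k l, star (f k) ⬝ᵥ f l = if k = l then 1 else 0)
    (hs : ∀ k ∈ s, P *ᵥ f k = f k) (hsc : ∀ k ∉ s, P *ᵥ f k = 0) :
    P = ∑ k ∈ s, vecMulVec (f k) (star (f k)) := by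
  calc P = P * ∑ k, vecMulVec (f k) (star (f k)) := by
        rw [sum_vecMulVec_star_eq_one hon, mul_one]
    _ = ∑ k, vecMulVec (P *ᵥ f k) (star (f k)) := by
        simp only [Finset.mul_sum, mul_vecMulVec]
    _ = ∑ k ∈ s, vecMulVec (f k) (star (f k)) := by
        rw [← sum_subset (subset_univ s) fun k _ hk => by rw [hsc k hk, zero_vecMulVec]]
        exact sum_congr rfl fun k hk => by rw [hs k hk]

theorem trace_mul_eq_sum_of_mulVec_eq {P : Matrix n n R} {s : Finset n}
    (hon : ∀ k l, star (f k) ⬝ᵥ f l = if k = l then 1 else 0)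
    (hs : ∀ k ∈ s, P *ᵥ f k = f k) (hsc : ∀ k ∉ s, P *ᵥ f k = 0) (M : Matrix n n R) :
    (M * P).trace = ∑ k ∈ s, star (f k) ⬝ᵥ (M *ᵥ f k) := by
  rw [eq_sum_vecMulVec_of_mulVec_eq hon hs hsc, Finset.mul_sum, trace_sum]
  exact sum_congr rfl fun k _ => by rw [mul_vecMulVec, trace_vecMulVec, dotProduct_comm]

theorem trace_eq_card_of_mulVec_eq {P : Matrix n n R} {s : Finset n}
    (hon : ∀ k l, star (f k) ⬝ᵥ f l = if k = l then 1 else 0)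
    (hs : ∀ k ∈ s, P *ᵥ f k = f k) (hsc : ∀ k ∉ s, P *ᵥ f k = 0) :
    P.trace = #s := by
  simpa [hon] using trace_mul_eq_sum_of_mulVec_eq hon hs hsc 1

end Spectral

namespace IsObservable

variable {P : Matrix (Fin D) (Fin D) ℂ}

theorem posSemidef (hP : IsObservable P) : P.PosSemidef := by
  have hP' : Pᴴ * P = P := by rw [hP.1.eq, hP.2]
  exact hP' ▸ Matrix.posSemidef_conjTranspose_mul_self P

theorem one_sub (hP : IsObservable P) : IsObservable (1 - P) :=
  ⟨Matrix.isHermitian_one.sub hP.1, by rw [sub_mul, one_mul, mul_sub, mul_one, hP.2, sub_self,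
    sub_zero]⟩

theorem expVal_nonneg (hP : IsObservable P) (v : Fin D → ℂ) : 0 ≤ expVal P v :=
  hP.posSemidef.dotProduct_mulVec_nonneg v

theorem expVal_mem_Icc (hP : IsObservable P) {v : Fin D → ℂ} (hv : star v ⬝ᵥ v = 1) :
    expVal P v ∈ Set.Icc 0 1 := by
  have h := hP.one_sub.expVal_nonneg v
  rw [expVal, Matrix.sub_mulVec, Matrix.one_mulVec, dotProduct_sub, hv, sub_nonneg] at h
  exact ⟨hP.expVal_nonneg v, h⟩

end IsObservable

section Evolution

variable (E : Fin D → ℝ) (s t : ℝ)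

theorem U_add : U E (s + t) = U E s * U E t := by
  simp only [U, Matrix.diagonal_mul_diagonal, ← Complex.exp_add]
  congr 1
  ext n
  push_cast
  ring_nf

theorem U_zero : U E 0 = 1 := by
  simp [U]

theorem U_conjTranspose : (U E t)ᴴ = U E (-t) := by
  simp only [U, Matrix.diagonal_conjTranspose]
  congr 1
  ext n
  simp [← Complex.exp_conj]

theorem evolve_one : evolve E t 1 = 1 := by
  rw [evolve, mul_one, ← U_add, add_neg_cancel, U_zero]

theorem evolve_smul (c : ℂ) (X : Matrix (Fin D) (Fin D) ℂ) :
    evolve E t (c • X) = c • evolve E t X := by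
  simp only [evolve, Matrix.mul_smul, Matrix.smul_mul]

theorem trace_evolve_mul (X Y : Matrix (Fin D) (Fin D) ℂ) :
    (evolve E t X * Y).trace = (evolve E (-t) Y * X).trace := by
  simp only [evolve, neg_neg]
  rw [Matrix.mul_assoc _ (U E (-t)), Matrix.trace_mul_comm, ← Matrix.mul_assoc]

theorem expVal_U_mulVec (P : Matrix (Fin D) (Fin D) ℂ) (v : Fin D → ℂ) :
    expVal P (U E t *ᵥ v) = star v ⬝ᵥ (evolve E (-t) P *ᵥ v) := by
  rw [expVal, Matrix.star_mulVec, ← Matrix.dotProduct_mulVec, U_conjTranspose, evolve, neg_neg,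
    Matrix.mulVec_mulVec, Matrix.mulVec_mulVec]

theorem dotProduct_star_U_mulVec (v : Fin D → ℂ) :
    star (U E t *ᵥ v) ⬝ᵥ (U E t *ᵥ v) = star v ⬝ᵥ v := by
  simpa [expVal, evolve_one] using expVal_U_mulVec E t 1 v

theorem continuous_expVal_U_mulVec (P : Matrix (Fin D) (Fin D) ℂ) (v : Fin D → ℂ) :
    Continuous fun t => expVal P (U E t *ᵥ v) := by
  simp only [expVal, U]
  fun_prop

theorem trace_evolve_mul_self_eq_sum_expVal {P : Matrix (Fin D) (Fin D) ℂ}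
    {f : Fin D → Fin D → ℂ} {s : Finset (Fin D)}
    (hon : ∀ k l, star (f k) ⬝ᵥ f l = if k = l then 1 else 0)
    (hs : ∀ k ∈ s, P *ᵥ f k = f k) (hsc : ∀ k ∉ s, P *ᵥ f k = 0) :
    (evolve E t P * P).trace = ∑ k ∈ s, expVal P (U E t *ᵥ f k) := by
  rw [trace_evolve_mul, trace_mul_eq_sum_of_mulVec_eq hon hs hsc]
  simp_rw [expVal_U_mulVec]

end Evolution

theorem Complex.exists_ofReal_of_mem_Icc {z : ℂ} (hz : z ∈ Set.Icc 0 1) :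
    ∃ r ∈ Set.Icc (0 : ℝ) 1, (r : ℂ) = z :=
  ⟨z.re, ⟨(Complex.le_def.1 hz.1).1, (Complex.le_def.1 hz.2).1⟩,
    (Complex.eq_re_of_ofReal_le (r := 0) (by simpa using hz.1)).symm⟩

theorem Complex.norm_sub_le_one_of_mem_Icc {z c : ℂ} (hz : z ∈ Set.Icc 0 1)
    (hc : c ∈ Set.Icc 0 1) : ‖z - c‖ ≤ 1 := by
  obtain ⟨r, hr, rfl⟩ := Complex.exists_ofReal_of_mem_Icc hz
  obtain ⟨s, hs, rfl⟩ := Complex.exists_ofReal_of_mem_Icc hc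
  rw [← Complex.ofReal_sub, Complex.norm_real, Real.norm_eq_abs, abs_le]
  constructor <;> linarith [hr.1, hr.2, hs.1, hs.2]

theorem Complex.norm_le_one_of_mem_Icc {z : ℂ} (hz : z ∈ Set.Icc 0 1) : ‖z‖ ≤ 1 := by
  simpa using Complex.norm_sub_le_one_of_mem_Icc hz (Set.left_mem_Icc.2 zero_le_one)

namespace IsWeight

variable {w : ℝ → ℝ}

theorem integrable_mul (hw : IsWeight w) {g : ℝ → ℂ} (hg : Continuous g) {C : ℝ}
    (hC : ∀ t, ‖g t‖ ≤ C) : Integrable fun t => (w t : ℂ) * g t :=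
  hw.integrable.ofReal.mul_bdd hg.aestronglyMeasurable (ae_of_all _ hC)

theorem integral_mul_mem_Icc (hw : IsWeight w) {g : ℝ → ℂ} (hg : Continuous g)
    (hg01 : ∀ t, g t ∈ Set.Icc 0 1) : ∫ t, (w t : ℂ) * g t ∈ Set.Icc (0 : ℂ) 1 := by
  choose r hr01 hr using fun t => Complex.exists_ofReal_of_mem_Icc (hg01 t)
  obtain rfl : g = fun t => (r t : ℂ) := funext fun t => (hr t).symm
  have hr_cont : Continuous r := by
    simpa [Function.comp_def] using Complex.continuous_re.comp hg
  have hint : Integrable fun t => w t * r t :=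
    hw.integrable.mul_bdd hr_cont.aestronglyMeasurable (ae_of_all _ fun t => by
      simpa [abs_of_nonneg (hr01 t).1] using (hr01 t).2)
  simp_rw [← Complex.ofReal_mul, integral_complex_ofReal]
  refine ⟨Complex.zero_le_real.2 (integral_nonneg fun t => mul_nonneg (hw.nonneg t) (hr01 t).1),
    ?_⟩
  have h := integral_mono hint hw.integrable fun t =>
    mul_le_of_le_one_right (hw.nonneg t) (hr01 t).2
  exact_mod_cast h.trans_eq hw.normalized

end IsWeight

theorem sum_le_of_card_filter_le {ι : Type*} (s : Finset ι) {a : ι → ℝ} {lam : ℝ} {m : ℕ}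
    (ha : ∀ k ∈ s, a k ≤ 1) (hlam : lam ≤ 1) (hm : #{k ∈ s | lam ≤ a k} ≤ m) :
    ∑ k ∈ s, a k ≤ #s * lam + m * (1 - lam) := by
  calc ∑ k ∈ s, a k ≤ ∑ k ∈ s, (lam + if lam ≤ a k then 1 - lam else 0) :=
        sum_le_sum fun k hk => by split_ifs with h <;> linarith [ha k hk]
    _ = #s * lam + #{k ∈ s | lam ≤ a k} * (1 - lam) := by
        rw [sum_add_distrib, sum_ite, sum_const, sum_const, sum_const_zero, add_zero,
          nsmul_eq_mul, nsmul_eq_mul]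
    _ ≤ #s * lam + m * (1 - lam) := by gcongr

theorem norm_inv_card_smul_sum_sub_le {ι E : Type*} [SeminormedAddCommGroup E]
    [NormedSpace ℝ E] {s : Finset ι} (hs : s.Nonempty) {x : ι → E} {c : E} {lam : ℝ} {m : ℕ}
    (hx : ∀ k ∈ s, ‖x k - c‖ ≤ 1) (hlam : lam ≤ 1) (hm : #{k ∈ s | lam ≤ ‖x k - c‖} ≤ m) :
    ‖(#s : ℝ)⁻¹ • ∑ k ∈ s, x k - c‖ ≤ lam + m / #s * (1 - lam) := by
  have hcard : (0 : ℝ) < #s := by exact_mod_cast hs.card_pos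
  have hcenter : (#s : ℝ)⁻¹ • ∑ k ∈ s, x k - c = (#s : ℝ)⁻¹ • ∑ k ∈ s, (x k - c) := by
    rw [sum_sub_distrib, sum_const, smul_sub, ← Nat.cast_smul_eq_nsmul ℝ, smul_smul,
      inv_mul_cancel₀ hcard.ne', one_smul]
  calc ‖(#s : ℝ)⁻¹ • ∑ k ∈ s, x k - c‖ = (#s : ℝ)⁻¹ * ‖∑ k ∈ s, (x k - c)‖ := by
        rw [hcenter, norm_smul, norm_inv, Real.norm_natCast]
    _ ≤ (#s : ℝ)⁻¹ * (#s * lam + m * (1 - lam)) := by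
        gcongr
        exact (norm_sum_le _ _).trans (sum_le_of_card_filter_le s hx hlam hm)
    _ = lam + m / #s * (1 - lam) := by field_simp

theorem eigenbasis_thermalization_bounds_autocorrelator_general
    {D : ℕ} (E : Fin D → ℝ)
    (PiA : Matrix (Fin D) (Fin D) ℂ) (hPiA : IsObservable PiA)
    (htr : 0 < PiA.trace.re)
    (w : ℝ → ℝ) (hw : IsWeight w)
    (lam : ℝ) (hlam1 : lam ≤ 1)
    (f : Fin D → (Fin D → ℂ))
    (hon : ∀ k l, dotProduct (star (f k)) (f l) = if k = l then 1 else 0)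
    (heig : ∀ k, PiA.mulVec (f k) = f k ∨ PiA.mulVec (f k) = 0)
    (nf : ℕ)
    (hcount : ((Finset.univ.filter fun k : Fin D =>
        PiA.mulVec (f k) = f k ∧
          lam ≤ ‖(∫ t : ℝ, (w t : ℂ) * expVal PiA ((U E t).mulVec (f k))) -
            ((PiA.trace.re / D : ℝ) : ℂ)‖).card) ≤ nf) :
    ‖(∫ t : ℝ, (w t : ℂ) *
          (evolve E t ((PiA.trace.re : ℂ)⁻¹ • PiA) * PiA).trace) -
        ((PiA.trace.re / D : ℝ) : ℂ)‖
      ≤ lam + (nf / PiA.trace.re) * (1 - lam) := by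
  set G := univ.filter fun k => PiA *ᵥ f k = f k
  have hG (k) (hk : k ∈ G) : PiA *ᵥ f k = f k := (mem_filter.1 hk).2
  have hGc (k) (hk : k ∉ G) : PiA *ᵥ f k = 0 := (heig k).resolve_left (by simpa [G] using hk)
  have htrG : PiA.trace.re = #G := by simp [trace_eq_card_of_mulVec_eq hon hG hGc]
  have hexp (k t) : expVal PiA (U E t *ᵥ f k) ∈ Set.Icc 0 1 :=
    hPiA.expVal_mem_Icc (by rw [dotProduct_star_U_mulVec, hon, if_pos rfl])
  have hint (k) : Integrable fun t => (w t : ℂ) * expVal PiA (U E t *ᵥ f k) :=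
    hw.integrable_mul (continuous_expVal_U_mulVec E PiA (f k))
      fun t => Complex.norm_le_one_of_mem_Icc (hexp k t)
  have hGD : (#G : ℝ) ≤ D := by exact_mod_cast (card_le_univ G).trans_eq (Fintype.card_fin D)
  have hthermal : ((#G / D : ℝ) : ℂ) ∈ Set.Icc 0 1 :=
    ⟨Complex.zero_le_real.2 (by positivity),
      by exact_mod_cast div_le_one_of_le₀ hGD (by positivity)⟩
  have hautocorr : ∫ t, (w t : ℂ) * (evolve E t (((#G : ℝ) : ℂ)⁻¹ • PiA) * PiA).trace
      = (#G : ℝ)⁻¹ • ∑ k ∈ G, ∫ t, (w t : ℂ) * expVal PiA (U E t *ᵥ f k) := by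
    simp_rw [evolve_smul, Matrix.smul_mul, trace_smul, smul_eq_mul,
      trace_evolve_mul_self_eq_sum_expVal E _ hon hG hGc, mul_left_comm (w _ : ℂ),
      Finset.mul_sum]
    rw [integral_finsetSum _ fun k _ => (hint k).const_mul _, Complex.real_smul,
      Complex.ofReal_inv, Finset.mul_sum]
    simp_rw [integral_const_mul]
  rw [htrG] at hcount
  rw [htrG, hautocorr]
  refine norm_inv_card_smul_sum_sub_le ?_
    (fun k _ => Complex.norm_sub_le_one_of_mem_Icc (hw.integral_mul_mem_Icc
      (continuous_expVal_U_mulVec E PiA (f k)) (hexp k)) hthermal) hlam1 ?_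
  · exact card_pos.1 (by exact_mod_cast htrG ▸ htr)
  · simpa [G, filter_filter] using hcount

/-- **Thermalization of almost all eigenbasis states of a bulky observable bounds the
autocorrelator.**  Let `Π_A` be an observable with `Tr Π_A > 0`, `ρ_A := Π_A / Tr Π_A`,
`⟨Π_A⟩ := Tr Π_A / D`, `w` a weight function, `λ ∈ [0,1]`, and `(f_k)` an orthonormal
eigenbasis of `Π_A` (each `f_k` satisfies `Π_A f_k = f_k` or `Π_A f_k = 0`).  If the number
of `k` with `Π_A f_k = f_k` and `|∫ w(t) ⟨f_k(t), Π_A f_k(t)⟩ dt - ⟨Π_A⟩| ≥ λ` is at most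
`n_f`, then `|∫ w(t) Tr(ρ_A(t) Π_A) dt - ⟨Π_A⟩| ≤ λ + (n_f / Tr Π_A)(1 - λ)`. -/
theorem eigenbasis_thermalization_bounds_autocorrelator
    {D : ℕ} (hD : 0 < D) (E : Fin D → ℝ)
    (PiA : Matrix (Fin D) (Fin D) ℂ) (hPiA : IsObservable PiA)
    (htr : 0 < PiA.trace.re)
    (w : ℝ → ℝ) (hw : IsWeight w)
    (lam : ℝ) (hlam0 : 0 ≤ lam) (hlam1 : lam ≤ 1)
    (f : Fin D → (Fin D → ℂ))
    (hon : ∀ k l, dotProduct (star (f k)) (f l) = if k = l then 1 else 0)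
    (heig : ∀ k, PiA.mulVec (f k) = f k ∨ PiA.mulVec (f k) = 0)
    (nf : ℕ)
    (hcount : ((Finset.univ.filter fun k : Fin D =>
        PiA.mulVec (f k) = f k ∧
          lam ≤ ‖(∫ t : ℝ, (w t : ℂ) * expVal PiA ((U E t).mulVec (f k))) -
            ((PiA.trace.re / D : ℝ) : ℂ)‖).card) ≤ nf) :
    ‖(∫ t : ℝ, (w t : ℂ) *
          (evolve E t ((PiA.trace.re : ℂ)⁻¹ • PiA) * PiA).trace) -
        ((PiA.trace.re / D : ℝ) : ℂ)‖
      ≤ lam + (nf / PiA.trace.re) * (1 - lam) :=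
  eigenbasis_thermalization_bounds_autocorrelator_general E PiA hPiA htr w hw lam hlam1 f hon heig
    nf hcount

end QET
end
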